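/- There exists a bounded constant β ∈ (1,∞), depending only on m, ν, d and the lattice data, such that max over s ∈ D_n of |f^N_s(ω)|² is at most β / (1 + ‖ω‖₂^{2ν+d}), for every ω ∈ ℝ^d with ω ≠ 0. (Lemma B.1: uniform spectral bound on the preconditioning filters.) -/

import Mathlib

open MeasureTheory ProbabilityTheory Filter Matrix BoundedContinuousFunction
open scoped BigOperators ENNReal NNReal Topology Classical

noncomputable section

/-- Points of `ℝ^d` with the Euclidean structure. -/
abbrev Pt (d : ℕ) := EuclideanSpace ℝ (Fin d)

/-- `N = ⌊n^(1/d)⌋`. -/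
def Nof (d n : ℕ) : ℕ := Nat.floor ((n : ℝ) ^ ((1 : ℝ) / (d : ℝ)))

/-- Quasi-uniformity of the `n`-point sampling set `D ⊂ ℝ^d`: for every `s ∈ D` there is an
enumeration of `D \ {s}` which is monotone in the distance to `s` (so that its `i`-th element is
the `i`-th nearest neighbour of `s`), whose distances obey the two-sided bound
`Cmin (i/n)^{1/d} ≤ r_{s,i} ≤ Cmax (i/n)^{1/d}`. -/
def QuasiUniform (d n : ℕ) (Cmin Cmax : ℝ) (D : Finset (Pt d)) : Prop :=
  D.card = n ∧
  ∀ s ∈ D, ∃ g : Fin (n - 1) → Pt d,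
    (∀ i, g i ∈ D.erase s) ∧ Function.Injective g ∧
    (∀ t ∈ D.erase s, ∃ i, g i = t) ∧
    (∀ i j : Fin (n - 1), i ≤ j → dist s (g i) ≤ dist s (g j)) ∧
    (∀ i : Fin (n - 1),
      Cmin * (((i : ℕ) + 1 : ℝ) / (n : ℝ)) ^ ((1 : ℝ) / (d : ℝ)) ≤ dist s (g i) ∧
      dist s (g i) ≤ Cmax * (((i : ℕ) + 1 : ℝ) / (n : ℝ)) ^ ((1 : ℝ) / (d : ℝ)))

/-- Preconditioning neighbourhoods `nb` and coefficients `a` of order `m` for the set `D`: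
each `N_m(s) = nb s` lies in `D` within distance `c₀/N` of `s`; the coefficients annihilate all
monomials `(t-s)^r` with `|r|₁ < m`, do not annihilate some monomial with `|r|₁ ≥ m`, and are
normalized in Euclidean norm. -/
def PrecondCoeffs (d m : ℕ) (c₀ : ℝ) (N : ℕ) (D : Finset (Pt d))
    (nb : Pt d → Finset (Pt d)) (a : Pt d → Pt d → ℝ) : Prop :=
  ∀ s ∈ D,
    nb s ⊆ D ∧
    (∀ t ∈ nb s, ‖t - s‖ ≤ c₀ / (N : ℝ)) ∧
    (∀ r : Fin d → ℕ, (∑ j, r j) < m →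
      (∑ t ∈ nb s, a s t * ∏ j, (t j - s j) ^ r j) = 0) ∧
    (∃ r : Fin d → ℕ, m ≤ (∑ j, r j) ∧
      (∑ t ∈ nb s, a s t * ∏ j, (t j - s j) ^ r j) ≠ 0) ∧
    (∑ t ∈ nb s, (a s t) ^ 2) = 1

/-- The Fourier filter `f^N_s(ω)` of the preconditioning coefficients. -/
def fN (d : ℕ) (ν : ℝ) (N : ℕ) (nb : Pt d → Finset (Pt d))
    (a : Pt d → Pt d → ℝ) (s ω : Pt d) : ℂ :=
  ((‖ω‖ ^ (-(ν + (d : ℝ) / 2)) : ℝ) : ℂ) *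
    ∑ t ∈ nb s, ((a s t : ℝ) : ℂ) *
      Complex.exp (Complex.I * ((inner ℝ ((N : ℝ) • ω) (t - s) : ℝ) : ℂ))

/-- `h_N(x) = (1 + (Nx)^{-2})^{-(ν + d/2)}`. -/
def hN (d : ℕ) (ν : ℝ) (N : ℕ) (x : ℝ) : ℝ :=
  (1 + ((N : ℝ) * x) ^ (-(2 : ℝ))) ^ (-(ν + (d : ℝ) / 2))

/-- The matrix `K_{n,m}(ρ)`, the `φ₀`-normalized covariance matrix of the preconditioned data,
given through its spectral representation. -/
def Kmat {d : ℕ} (ν : ℝ) (N : ℕ) (D : Finset (Pt d))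
    (nb : Pt d → Finset (Pt d)) (a : Pt d → Pt d → ℝ) (ρ : ℝ) :
    Matrix D D ℝ :=
  Matrix.of fun s t =>
    ρ ^ (-(2 * ν)) *
      (∫ (ω : Pt d),
        Complex.exp (Complex.I * ((inner ℝ ((t : Pt d) - (s : Pt d)) ω : ℝ) : ℂ)) *
          fN d ν N nb a (s : Pt d) ω * (starRingEnd ℂ) (fN d ν N nb a (t : Pt d) ω) *
          ((hN d ν N (ρ * ‖ω‖) : ℝ) : ℂ)).re

/-- Block-diagonal restriction of a matrix along the partition determined by a labelling `bin`. -/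
def bdiag {d : ℕ} {D : Finset (Pt d)} (bin : Pt d → ℕ) (A : Matrix D D ℝ) :
    Matrix D D ℝ :=
  Matrix.of fun s t => if bin (s : Pt d) = bin (t : Pt d) then A s t else 0

/-- `L_{n,m}(ρ) = ρ^{2ν} K_{n,m}(ρ)`. -/
def Lmat {d : ℕ} (ν : ℝ) (N : ℕ) (D : Finset (Pt d))
    (nb : Pt d → Finset (Pt d)) (a : Pt d → Pt d → ℝ) (ρ : ℝ) :
    Matrix D D ℝ :=
  ρ ^ (2 * ν) • Kmat ν N D nb a ρ

/-- `K^B_{n,m}(ρ)`: the block-diagonal approximation of `K_{n,m}(ρ)`. -/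
def KmatB {d : ℕ} (ν : ℝ) (N : ℕ) (D : Finset (Pt d))
    (nb : Pt d → Finset (Pt d)) (a : Pt d → Pt d → ℝ) (bin : Pt d → ℕ) (ρ : ℝ) :
    Matrix D D ℝ := bdiag bin (Kmat ν N D nb a ρ)

/-- `L^B_{n,m}(ρ) = ρ^{2ν} K^B_{n,m}(ρ)`. -/
def LmatB {d : ℕ} (ν : ℝ) (N : ℕ) (D : Finset (Pt d))
    (nb : Pt d → Finset (Pt d)) (a : Pt d → Pt d → ℝ) (bin : Pt d → ℕ) (ρ : ℝ) :
    Matrix D D ℝ := bdiag bin (Lmat ν N D nb a ρ)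

/-- Euclidean norm of a finite-dimensional real vector. -/
def eNorm {ι : Type*} [Fintype ι] (v : ι → ℝ) : ℝ := Real.sqrt (∑ i, (v i) ^ 2)

/-- Frobenius norm of a real matrix. -/
def frobNorm {ι : Type*} [Fintype ι] (A : Matrix ι ι ℝ) : ℝ :=
  Real.sqrt (∑ i, ∑ j, (A i j) ^ 2)

/-- The `ℓ² → ℓ²` operator (spectral) norm of a real matrix. -/
def opNorm {ι : Type*} [Fintype ι] (A : Matrix ι ι ℝ) : ℝ :=
  sSup {c : ℝ | ∃ v : ι → ℝ, eNorm v ≤ 1 ∧ c = eNorm (A.mulVec v)}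

/-- The positive semidefinite square root of a positive semidefinite matrix (the definition
`Matrix.PosSemidef.sqrt` of the older Mathlib, which has since been removed). -/
def Matrix.PosSemidef.sqrt {n : Type*} [Fintype n] [DecidableEq n]
    {A : Matrix n n ℝ} (hA : A.PosSemidef) : Matrix n n ℝ :=
  hA.1.eigenvectorUnitary.1 * Matrix.diagonal ((↑) ∘ (Real.sqrt ·) ∘ hA.1.eigenvalues) *
    (star hA.1.eigenvectorUnitary : Matrix n n ℝ)

/-- The nuclear norm (sum of singular values): trace of the psd square root of `Aᵀ A`. -/
def nucNorm {ι : Type*} [Fintype ι] [DecidableEq ι] (A : Matrix ι ι ℝ) : ℝ :=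
  (Matrix.PosSemidef.sqrt (Matrix.posSemidef_conjTranspose_mul_self A)).trace

/-- The standard Gaussian product measure on `ι → ℝ`. -/
def stdGaussianPi (ι : Type*) [Fintype ι] : Measure (ι → ℝ) :=
  Measure.pi fun _ => gaussianReal 0 1

end

/-!
Quasi-uniformity leaves at most `K = ⌊(2c₀/Cmin)^d⌋₊ + 1` points of `D` within distance `c₀/N`
of `s`, so by Cauchy–Schwarz the normalized coefficients satisfy `(∑ |a|)² ≤ K`, and the
trigonometric sum in `f^N_s(ω)` is bounded by `√K`. Its phases are at most `c₀‖ω‖`, and the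
vanishing moments annihilate the degree `m - 1` Taylor polynomial of `exp (i x)`, so the sum is
also at most `√K (c₀‖ω‖)^m`. Since `m ≥ ν + d/2`, this second bound absorbs the factor
`‖ω‖^{-(2ν+d)}` near `0`, while the first gives the decay at infinity.
-/

open Finset Complex

theorem hasDerivAt_cexp_I_mul_sub_sum_range (m : ℕ) (x : ℝ) :
    HasDerivAt (fun y : ℝ => cexp (I * y) - ∑ k ∈ range (m + 1), (I * y) ^ k / (k.factorial : ℂ))
      (I * (cexp (I * x) - ∑ k ∈ range m, (I * x) ^ k / (k.factorial : ℂ))) x := by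
  have hlin : HasDerivAt (fun y : ℝ => I * (y : ℂ)) I x := by
    simpa using ((hasDerivAt_id (x : ℂ)).const_mul I).comp_ofReal
  have hsum := HasDerivAt.fun_sum (u := range (m + 1)) fun k _ =>
    ((hlin.pow k).div_const (k.factorial : ℂ))
  refine (hlin.cexp.sub hsum).congr_deriv ?_
  rw [sum_range_succ', mul_sub, mul_sum]
  simp only [Nat.cast_zero, zero_mul, zero_div, add_zero, Nat.factorial_succ,
    Nat.add_sub_cancel, Nat.cast_mul]
  congr 1
  · ring
  refine sum_congr rfl fun k _ => ?_
  have hk : (k.factorial : ℂ) ≠ 0 := Nat.cast_ne_zero.2 k.factorial_ne_zero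
  push_cast
  field_simp

theorem norm_cexp_I_mul_sub_sum_range_le (m : ℕ) (x : ℝ) :
    ‖cexp (I * x) - ∑ k ∈ range m, (I * x) ^ k / (k.factorial : ℂ)‖ ≤ |x| ^ m := by
  induction m generalizing x with
  | zero => simp [Complex.norm_exp]
  | succ m ih =>
    have hcont : Continuous fun t : ℝ =>
        I * (cexp (I * t) - ∑ k ∈ range m, (I * t) ^ k / (k.factorial : ℂ)) := by
      fun_prop
    have hF := intervalIntegral.integral_eq_sub_of_hasDerivAt
      (fun t _ => hasDerivAt_cexp_I_mul_sub_sum_range m t) (hcont.intervalIntegrable 0 x)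
    have hF0 : cexp (I * ((0 : ℝ) : ℂ)) - ∑ k ∈ range (m + 1), (I * ((0 : ℝ) : ℂ)) ^ k /
        (k.factorial : ℂ) = 0 := by
      simp [sum_range_succ']
    rw [hF0, sub_zero] at hF
    rw [← hF]
    refine (intervalIntegral.norm_integral_le_of_norm_le_const fun t ht => ?_).trans_eq
      (by rw [sub_zero, pow_succ])
    rw [norm_mul, norm_I, one_mul]
    have htx : |t| ≤ |x| := by simpa using Set.abs_sub_left_of_mem_uIcc (Set.uIoc_subset_uIcc ht)
    exact (ih t).trans (pow_le_pow_left₀ (abs_nonneg t) htx m)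

theorem sum_mul_pow_sum_mul_eq_zero_of_moments {α ι R : Type*} [Fintype ι] [CommSemiring R]
    {m : ℕ} (s : Finset α) (a : α → R) (v : α → ι → R)
    (hmom : ∀ r : ι → ℕ, ∑ j, r j < m → ∑ t ∈ s, a t * ∏ j, v t j ^ r j = 0)
    (c : ι → R) {k : ℕ} (hk : k < m) :
    ∑ t ∈ s, a t * (∑ j, c j * v t j) ^ k = 0 := by
  simp_rw [sum_pow_eq_sum_piAntidiag, mul_pow, prod_mul_distrib, mul_sum]
  rw [sum_comm]
  refine sum_eq_zero fun r hr => ?_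
  have hmom_r := hmom r ((mem_piAntidiag.1 hr).1 ▸ hk)
  calc ∑ t ∈ s, a t * (Nat.multinomial univ r * ((∏ j, c j ^ r j) * ∏ j, v t j ^ r j))
      = (Nat.multinomial univ r * ∏ j, c j ^ r j) * ∑ t ∈ s, a t * ∏ j, v t j ^ r j := by
        rw [mul_sum]
        exact sum_congr rfl fun t _ => by ring
    _ = 0 := by rw [hmom_r, mul_zero]

section ExpSums

variable {α : Type*} (s : Finset α) (a x : α → ℝ)

theorem norm_sum_mul_cexp_I_mul_le :
    ‖∑ t ∈ s, (a t : ℂ) * cexp (I * x t)‖ ≤ ∑ t ∈ s, |a t| :=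
  (norm_sum_le _ _).trans_eq <| sum_congr rfl fun t _ => by
    rw [norm_mul, norm_real, Real.norm_eq_abs, mul_comm I, norm_exp_ofReal_mul_I, mul_one]

theorem norm_sum_mul_cexp_I_mul_le_of_moments {m : ℕ} {R : ℝ}
    (hmom : ∀ k < m, ∑ t ∈ s, a t * x t ^ k = 0) (hx : ∀ t ∈ s, |x t| ≤ R) :
    ‖∑ t ∈ s, (a t : ℂ) * cexp (I * x t)‖ ≤ (∑ t ∈ s, |a t|) * R ^ m := by
  have htaylor : ∑ t ∈ s, (a t : ℂ) * ∑ k ∈ range m, (I * x t) ^ k / (k.factorial : ℂ) = 0 := by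
    simp_rw [mul_sum]
    rw [sum_comm]
    refine sum_eq_zero fun k hk => ?_
    calc ∑ t ∈ s, (a t : ℂ) * ((I * x t) ^ k / (k.factorial : ℂ))
        = I ^ k / (k.factorial : ℂ) * ((∑ t ∈ s, a t * x t ^ k : ℝ) : ℂ) := by
          push_cast
          rw [mul_sum]
          exact sum_congr rfl fun t _ => by ring
      _ = 0 := by rw [hmom k (mem_range.1 hk), ofReal_zero, mul_zero]
  rw [← sub_zero (∑ t ∈ s, _), ← htaylor, ← sum_sub_distrib, sum_mul]
  refine (norm_sum_le _ _).trans (sum_le_sum fun t ht => ?_)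
  rw [← mul_sub, norm_mul, norm_real, Real.norm_eq_abs]
  exact mul_le_mul_of_nonneg_left ((norm_cexp_I_mul_sub_sum_range_le m (x t)).trans
    (pow_le_pow_left₀ (abs_nonneg _) (hx t ht) m)) (abs_nonneg _)

end ExpSums

theorem rpow_neg_sq_mul_le_div_one_add {w p A K L : ℝ} {m : ℕ} (hw : 0 < w) (hp : 0 ≤ p)
    (hpm : p ≤ m) (hA : 0 ≤ A) (hAK : A ≤ K) (hAL : A ≤ L * w ^ (2 * m)) :
    (w ^ (-p)) ^ 2 * A ≤ 2 * (K + L) / (1 + w ^ (2 * p)) := by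
  set P := w ^ (2 * p) with hP
  have hP0 : 0 < P := Real.rpow_pos_of_pos hw _
  have hsq : (w ^ (-p)) ^ 2 = P⁻¹ := by
    rw [← Real.rpow_natCast, ← Real.rpow_mul hw.le, hP, ← Real.rpow_neg hw.le]
    ring_nf
  have hK : 0 ≤ K := hA.trans hAK
  have hL : 0 ≤ L := nonneg_of_mul_nonneg_left (hA.trans hAL) (by positivity)
  rw [hsq, le_div_iff₀ (by positivity)]
  rcases le_or_gt 1 w with hw1 | hw1
  · have hP1 : 1 ≤ P := Real.one_le_rpow hw1 (by positivity)
    calc P⁻¹ * A * (1 + P) ≤ P⁻¹ * K * (2 * P) := by gcongr; linarith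
      _ = 2 * K := by field_simp
      _ ≤ 2 * (K + L) := by linarith
  · have hP1 : P ≤ 1 := Real.rpow_le_one hw.le hw1.le (by positivity)
    have hwP : w ^ (2 * m) ≤ P := by
      rw [hP, ← Real.rpow_natCast]
      exact Real.rpow_le_rpow_of_exponent_ge hw hw1.le (by push_cast; linarith)
    calc P⁻¹ * A * (1 + P) ≤ P⁻¹ * (L * P) * 2 := by
          gcongr
          · exact hAL.trans (by gcongr)
          · linarith
      _ = 2 * L := by field_simp
      _ ≤ 2 * (K + L) := by linarith

theorem le_mul_pow_of_mul_rpow_le {d : ℕ} (hd : d ≠ 0) {C n y r : ℝ} (hC : 0 < C) (hn : 0 < n)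
    (hy : 0 ≤ y) (h : C * (y / n) ^ ((1 : ℝ) / d) ≤ r) : y ≤ n * (r / C) ^ d := by
  have hyn : 0 ≤ y / n := by positivity
  rw [← div_le_iff₀' hn, ← Real.rpow_inv_natCast_pow hyn hd, ← one_div]
  exact pow_le_pow_left₀ (by positivity) ((le_div_iff₀' hC).2 h) d

theorem Nof_pos {d n : ℕ} (hn : 0 < n) : 0 < Nof d n :=
  Nat.le_floor <| by simpa using Real.one_le_rpow (by exact_mod_cast hn) (by positivity)

theorem natCast_le_two_mul_Nof_pow {d : ℕ} (hd : d ≠ 0) (n : ℕ) :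
    (n : ℝ) ≤ (2 * Nof d n) ^ d := by
  rcases n.eq_zero_or_pos with rfl | hn
  · simp
  have hN : (1 : ℝ) ≤ Nof d n := by exact_mod_cast Nof_pos hn
  calc (n : ℝ) = ((n : ℝ) ^ ((1 : ℝ) / d)) ^ d := by
        rw [one_div, Real.rpow_inv_natCast_pow n.cast_nonneg hd]
    _ ≤ (Nof d n + 1) ^ d := pow_le_pow_left₀ (by positivity) (Nat.lt_floor_add_one _).le d
    _ ≤ (2 * Nof d n) ^ d := pow_le_pow_left₀ (by positivity) (by linarith) d

theorem QuasiUniform.card_filter_dist_le {d n : ℕ} {Cmin Cmax : ℝ} {D : Finset (Pt d)}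
    (hQ : QuasiUniform d n Cmin Cmax D) (hd : d ≠ 0) (hCmin : 0 < Cmin) {s : Pt d} (hs : s ∈ D)
    (r : ℝ) : #{t ∈ D | dist s t ≤ r} ≤ ⌊n * (r / Cmin) ^ d⌋₊ + 1 := by
  obtain ⟨hcard, hQs⟩ := hQ
  obtain ⟨g, -, -, hg_surj, -, hg_dist⟩ := hQs s hs
  have hn : (0 : ℝ) < n := by exact_mod_cast hcard ▸ card_pos.2 ⟨s, hs⟩
  set I : Finset (Fin (n - 1)) := {i | dist s (g i) ≤ r}
  have hsub : {t ∈ D | dist s t ≤ r} ⊆ insert s (I.image g) := by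
    intro t ht
    obtain ⟨htD, htr⟩ := mem_filter.1 ht
    by_cases hts : t = s
    · exact hts ▸ mem_insert_self _ _
    obtain ⟨i, rfl⟩ := hg_surj t (mem_erase.2 ⟨hts, htD⟩)
    exact mem_insert_of_mem (mem_image_of_mem g (mem_filter.2 ⟨mem_univ _, htr⟩))
  have hidx : #I ≤ ⌊n * (r / Cmin) ^ d⌋₊ := by
    refine (card_le_card_of_injOn Fin.val (fun i hi => ?_)
      Fin.val_injective.injOn).trans_eq (card_range _)
    have hi := le_mul_pow_of_mul_rpow_le hd hCmin hn (by positivity)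
      ((hg_dist i).1.trans (mem_filter.1 hi).2)
    exact mem_range.2 (Nat.le_floor (by push_cast; exact hi))
  calc #{t ∈ D | dist s t ≤ r} ≤ #(insert s (I.image g)) :=
        card_le_card hsub
    _ ≤ #(I.image g) + 1 := card_insert_le _ _
    _ ≤ ⌊n * (r / Cmin) ^ d⌋₊ + 1 := by gcongr; exact card_image_le.trans hidx

section Preconditioning

variable {d m n : ℕ} {c₀ : ℝ} {N : ℕ} {D : Finset (Pt d)} {nb : Pt d → Finset (Pt d)}
  {a : Pt d → Pt d → ℝ} {s : Pt d}

theorem PrecondCoeffs.sum_mul_inner_pow_eq_zero (hP : PrecondCoeffs d m c₀ N D nb a)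
    (hs : s ∈ D) (y : Pt d) {k : ℕ} (hk : k < m) :
    ∑ t ∈ nb s, a s t * inner ℝ y (t - s) ^ k = 0 := by
  have h := sum_mul_pow_sum_mul_eq_zero_of_moments (nb s) (a s) (fun t j => t j - s j)
    (hP s hs).2.2.1 (fun j => y j) hk
  simpa [PiLp.inner_apply, mul_comm] using h

theorem PrecondCoeffs.card_nb_le {Cmin Cmax : ℝ} (hQ : QuasiUniform d n Cmin Cmax D)
    (hP : PrecondCoeffs d m c₀ (Nof d n) D nb a) (hd : d ≠ 0) (hCmin : 0 < Cmin) (hc₀ : 0 ≤ c₀)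
    (hs : s ∈ D) : #(nb s) ≤ ⌊(2 * c₀ / Cmin) ^ d⌋₊ + 1 := by
  have hN : (0 : ℝ) < Nof d n := by exact_mod_cast Nof_pos (hQ.1 ▸ card_pos.2 ⟨s, hs⟩)
  have hball : nb s ⊆ {t ∈ D | dist s t ≤ c₀ / Nof d n} := fun t ht =>
    mem_filter.2 ⟨(hP s hs).1 ht, by rw [dist_comm, dist_eq_norm]; exact (hP s hs).2.1 t ht⟩
  have hvol : n * (c₀ / Nof d n / Cmin) ^ d ≤ (2 * c₀ / Cmin) ^ d :=
    calc n * (c₀ / Nof d n / Cmin) ^ d ≤ (2 * Nof d n) ^ d * (c₀ / Nof d n / Cmin) ^ d := by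
          gcongr; exact natCast_le_two_mul_Nof_pow hd n
      _ = (2 * c₀ / Cmin) ^ d := by rw [← mul_pow]; field_simp
  calc #(nb s) ≤ #{t ∈ D | dist s t ≤ c₀ / Nof d n} := card_le_card hball
    _ ≤ ⌊n * (c₀ / Nof d n / Cmin) ^ d⌋₊ + 1 := hQ.card_filter_dist_le hd hCmin hs _
    _ ≤ ⌊(2 * c₀ / Cmin) ^ d⌋₊ + 1 := by gcongr

theorem PrecondCoeffs.sq_norm_sum_cexp_le (hP : PrecondCoeffs d m c₀ N D nb a) (hs : s ∈ D)
    (hN : 0 < N) {K : ℝ} (hK : #(nb s) ≤ K) (ω : Pt d) :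
    ‖∑ t ∈ nb s, (a s t : ℂ) * cexp (I * inner ℝ ((N : ℝ) • ω) (t - s))‖ ^ 2 ≤ K ∧
      ‖∑ t ∈ nb s, (a s t : ℂ) * cexp (I * inner ℝ ((N : ℝ) • ω) (t - s))‖ ^ 2 ≤
        K * c₀ ^ (2 * m) * ‖ω‖ ^ (2 * m) := by
  obtain ⟨-, hdist, -, -, hnorm⟩ := hP s hs
  have hCS : (∑ t ∈ nb s, |a s t|) ^ 2 ≤ K := by
    have h := sq_sum_le_card_mul_sum_sq (s := nb s) (f := fun t => |a s t|)
    simp only [sq_abs, hnorm, mul_one] at h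
    exact h.trans hK
  have hphase : ∀ t ∈ nb s, |inner ℝ ((N : ℝ) • ω) (t - s)| ≤ c₀ * ‖ω‖ := fun t ht =>
    calc |inner ℝ ((N : ℝ) • ω) (t - s)| ≤ N * ‖ω‖ * ‖t - s‖ := by
          simpa [norm_smul] using abs_real_inner_le_norm ((N : ℝ) • ω) (t - s)
      _ ≤ N * ‖ω‖ * (c₀ / N) := by gcongr; exact hdist t ht
      _ = c₀ * ‖ω‖ := by field_simp
  constructor
  · exact (pow_le_pow_left₀ (norm_nonneg _) (norm_sum_mul_cexp_I_mul_le _ _ _) 2).trans hCS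
  · calc _ ≤ ((∑ t ∈ nb s, |a s t|) * (c₀ * ‖ω‖) ^ m) ^ 2 :=
          pow_le_pow_left₀ (norm_nonneg _) (norm_sum_mul_cexp_I_mul_le_of_moments _ _ _
            (fun k hk => hP.sum_mul_inner_pow_eq_zero hs _ hk) hphase) 2
      _ = (∑ t ∈ nb s, |a s t|) ^ 2 * (c₀ ^ (2 * m) * ‖ω‖ ^ (2 * m)) := by ring
      _ ≤ K * c₀ ^ (2 * m) * ‖ω‖ ^ (2 * m) := by
          rw [← mul_assoc]; gcongr; exact (even_two_mul m).pow_nonneg c₀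

end Preconditioning

theorem stmt3_general (d m : ℕ) (ν Cmin Cmax c₀ : ℝ)
    (hd : 1 ≤ d) (hν : 0 < ν) (hm : ν + (d : ℝ) / 2 ≤ (m : ℝ))
    (hCmin : 0 < Cmin) (hc₀ : 0 < c₀) :
    ∃ β : ℝ, 1 < β ∧
      ∀ (n : ℕ) (D : Finset (Pt d)) (nb : Pt d → Finset (Pt d)) (a : Pt d → Pt d → ℝ),
        QuasiUniform d n Cmin Cmax D →
        PrecondCoeffs d m c₀ (Nof d n) D nb a →
        ∀ ω : Pt d, ω ≠ 0 → ∀ s ∈ D,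
          ‖fN d ν (Nof d n) nb a s ω‖ ^ 2 ≤
            β / (1 + ‖ω‖ ^ (2 * ν + (d : ℝ))) := by
  set K : ℝ := ((⌊(2 * c₀ / Cmin) ^ d⌋₊ + 1 : ℕ) : ℝ)
  have hK : 1 ≤ K := Nat.one_le_cast.2 (Nat.succ_pos _)
  refine ⟨2 * (K + K * c₀ ^ (2 * m)), by nlinarith [pow_nonneg hc₀.le (2 * m)], ?_⟩
  intro n D nb a hQ hP ω hω s hs
  have hcard : (#(nb s) : ℝ) ≤ K := Nat.cast_le.2 (hP.card_nb_le hQ (by omega) hCmin hc₀.le hs)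
  obtain ⟨hS, hSω⟩ :=
    hP.sq_norm_sum_cexp_le hs (Nof_pos (hQ.1 ▸ card_pos.2 ⟨s, hs⟩)) hcard ω
  rw [fN, norm_mul, norm_real, Real.norm_of_nonneg (by positivity), mul_pow,
    show 2 * ν + (d : ℝ) = 2 * (ν + d / 2) by ring]
  exact rpow_neg_sq_mul_le_div_one_add (norm_pos_iff.2 hω) (by positivity) hm (sq_nonneg _) hS hSω

/-- **Lemma B.1 (uniform spectral bound on the preconditioning filters).**  There is a bounded
constant `β ∈ (1, ∞)`, depending only on `m, ν, d` and the lattice data (through the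
quasi-uniformity constants and the neighbourhood-radius constant) but not on `n`, such that
`max_{s ∈ Dₙ} |f^N_s(ω)|² ≤ β / (1 + ‖ω‖^{2ν+d})` for every `ω ≠ 0`. -/
theorem stmt3 (d m : ℕ) (ν Cmin Cmax c₀ : ℝ)
    (hd : 1 ≤ d) (hν : 0 < ν) (hm : ν + (d : ℝ) / 2 ≤ (m : ℝ))
    (hCmin : 0 < Cmin) (hCC : Cmin ≤ Cmax) (hc₀ : 0 < c₀) :
    ∃ β : ℝ, 1 < β ∧
      ∀ (n : ℕ) (D : Finset (Pt d)) (nb : Pt d → Finset (Pt d)) (a : Pt d → Pt d → ℝ),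
        QuasiUniform d n Cmin Cmax D →
        PrecondCoeffs d m c₀ (Nof d n) D nb a →
        ∀ ω : Pt d, ω ≠ 0 → ∀ s ∈ D,
          ‖fN d ν (Nof d n) nb a s ω‖ ^ 2 ≤
            β / (1 + ‖ω‖ ^ (2 * ν + (d : ℝ))) :=
  stmt3_general d m ν Cmin Cmax c₀ hd hν hm hCmin hc₀
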